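/- arXiv:2405.16904 — 2 statements merged into one kernel-verified Lean document; each statement's English description precedes it below -/
import Mathlib

section
/- Let s be a nonzero even integer and t an integer with gcd(t, s) = 1. Then there exist a natural number k with 1 ≤ k ≤ |s|, even integers a_1, …, a_k, and rational numbers q_1, …, q_k such that q_k = a_k, for every index 1 ≤ i < k one has q_{i+1} ≠ 0 and q_i = a_i − 1/q_{i+1}, and q_1 = t/s. -/
/-!
Write `u / v = 2c + r / v` with `2c` the even integer nearest to `u / v`, so `|r| ≤ |v|`.
If `u + v` is odd, then so is `r - v`, which rules out `r = ±v`; hence `|r| < |v|` and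
`u / v = 2c - 1 / (-v / r)` with `(-v, r)` again of odd sum. Induction on `|v|` ends when
`r = 0`, i.e. when `u / v = 2c` is itself an even integer, after at most `|v|` steps.
-/

/-- `a` and `q` describe a negative continued fraction `q 1 = a 1 - 1 / (a 2 - ⋯ - 1 / a k)`
with even partial quotients, `q i` being its `i`-th tail. Index `0` is not used. -/
structure IsEvenNegCF (k : ℕ) (a : ℕ → ℤ) (q : ℕ → ℚ) : Prop where
  one_le : 1 ≤ k
  even : ∀ i, 1 ≤ i → i ≤ k → Even (a i)
  last : q k = a k
  step : ∀ i, 1 ≤ i → i < k → q (i + 1) ≠ 0 ∧ q i = a i - 1 / q (i + 1)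

def prependAtOne {α : Type*} (b : α) (f : ℕ → α) : ℕ → α :=
  fun i => if i = 1 then b else f (i - 1)

@[simp]
lemma prependAtOne_one {α : Type*} (b : α) (f : ℕ → α) : prependAtOne b f 1 = b := if_pos rfl

@[simp]
lemma prependAtOne_add_one {α : Type*} (b : α) (f : ℕ → α) {i : ℕ} (hi : 1 ≤ i) :
    prependAtOne b f (i + 1) = f i := by
  rw [prependAtOne, if_neg (by omega), Nat.add_sub_cancel]

lemma isEvenNegCF_one {a : ℤ} (ha : Even a) :
    IsEvenNegCF 1 (fun _ => a) (fun _ => a) where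
  one_le := le_rfl
  even _ _ _ := ha
  last := rfl
  step _ h₁ h₂ := absurd h₂ (not_lt.2 h₁)

lemma IsEvenNegCF.prepend {k : ℕ} {a : ℕ → ℤ} {q : ℕ → ℚ} (h : IsEvenNegCF k a q)
    (hq : q 1 ≠ 0) {b : ℤ} (hb : Even b) :
    IsEvenNegCF (k + 1) (prependAtOne b a) (prependAtOne (b - 1 / q 1) q) where
  one_le := by omega
  even i h₁ h₂ := by
    obtain _ | _ | j := i
    · omega
    · simpa using hb
    · simpa using h.even (j + 1) (by omega) (by omega)
  last := by simpa [h.one_le] using h.last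
  step i h₁ h₂ := by
    obtain _ | _ | j := i
    · omega
    · simpa using hq
    · simpa using h.step (j + 1) (by omega) (by omega)

lemma exists_abs_sub_two_mul_mul_le (u : ℤ) {v : ℤ} (hv : v ≠ 0) :
    ∃ c : ℤ, |u - 2 * c * v| ≤ |v| := by
  set x : ℚ := u / (2 * v) with hx
  refine ⟨round x, ?_⟩
  have hv' : (v : ℚ) ≠ 0 := by exact_mod_cast hv
  have key : ((u - 2 * round x * v : ℤ) : ℚ) = (x - round x) * (2 * v) := by
    rw [hx]
    push_cast
    field_simp
  suffices h : |((u - 2 * round x * v : ℤ) : ℚ)| ≤ |(v : ℚ)| by exact_mod_cast h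
  calc |((u - 2 * round x * v : ℤ) : ℚ)| = |x - round x| * (2 * |(v : ℚ)|) := by
        rw [key, abs_mul, abs_mul, abs_two]
    _ ≤ 1 / 2 * (2 * |(v : ℚ)|) := by gcongr; exact abs_sub_round x
    _ = |(v : ℚ)| := by ring

lemma abs_lt_abs_of_odd_sub {r v : ℤ} (hle : |r| ≤ |v|) (hodd : Odd (r - v)) : |r| < |v| := by
  refine hle.lt_of_ne fun h => ?_
  rcases abs_eq_abs.1 h with rfl | rfl
  · simp at hodd
  · exact Int.not_even_iff_odd.2 hodd ⟨-v, by ring⟩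

theorem exists_isEvenNegCF_eq_div (u v : ℤ) (hv : v ≠ 0) (huv : Odd (u + v)) :
    ∃ (k : ℕ) (a : ℕ → ℤ) (q : ℕ → ℚ), IsEvenNegCF k a q ∧ (k : ℤ) ≤ |v| ∧ q 1 = u / v := by
  induction hn : v.natAbs using Nat.strong_induction_on generalizing u v with
  | _ n ih =>
  obtain ⟨c, hc⟩ := exists_abs_sub_two_mul_mul_le u hv
  have hv' : (v : ℚ) ≠ 0 := by exact_mod_cast hv
  set r := u - 2 * c * v with hr_def
  by_cases hr : r = 0
  · refine ⟨1, _, _, isEvenNegCF_one (even_two_mul c), by simpa using Int.one_le_abs hv, ?_⟩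
    have hu : (u : ℚ) = 2 * c * v := by exact_mod_cast (sub_eq_zero.1 hr)
    rw [hu]
    push_cast
    field_simp
  have hodd : Odd (r - v) := by
    have : r - v = u + v - 2 * ((c + 1) * v) := by ring
    rw [this]
    exact huv.sub_even (even_two_mul _)
  have hlt : |r| < |v| := abs_lt_abs_of_odd_sub hc hodd
  obtain ⟨k, a, q, hcf, hk, hq⟩ :=
    ih r.natAbs (hn ▸ by zify; exact hlt) (-v) r hr (by rwa [neg_add_eq_sub]) rfl
  have hr' : (r : ℚ) ≠ 0 := by exact_mod_cast hr
  have hq0 : q 1 ≠ 0 := by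
    rw [hq]
    push_cast
    exact div_ne_zero (neg_ne_zero.2 hv') hr'
  refine ⟨k + 1, _, _, hcf.prepend hq0 (even_two_mul c), by push_cast; omega, ?_⟩
  rw [prependAtOne_one, hq, hr_def]
  push_cast
  field_simp
  ring

/-- Arithmetic core of Lemma 2.2: `t/s` (with `s` even, nonzero, coprime to `t`)
is a negative continued fraction with at most `|s|` even partial quotients. -/
theorem stmt_0 (s t : ℤ) (hs : s ≠ 0) (hse : Even s) (hco : Int.gcd t s = 1) :
    ∃ (k : ℕ) (a : ℕ → ℤ) (q : ℕ → ℚ),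
      1 ≤ k ∧ (k : ℤ) ≤ |s| ∧
      (∀ i, 1 ≤ i → i ≤ k → Even (a i)) ∧
      q k = (a k : ℚ) ∧
      (∀ i, 1 ≤ i → i < k → q (i + 1) ≠ 0 ∧ q i = (a i : ℚ) - 1 / q (i + 1)) ∧
      q 1 = (t : ℚ) / (s : ℚ) := by
  have ht : Odd t := Int.not_even_iff_odd.1 fun ht => by
    simpa [hco] using Int.dvd_coe_gcd ht.two_dvd hse.two_dvd
  obtain ⟨k, a, q, hcf, hk, hq⟩ := exists_isEvenNegCF_eq_div t s hs (ht.add_even hse)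
  exact ⟨k, a, q, hcf.one_le, hk, hcf.even, hcf.last, hcf.step, hq⟩
end

section
/- Let a and b be coprime integers of opposite parity (one even, one odd) with b ≠ 0. Then there exist an even integer m and an integer r such that a = m·b + r, |r| < |b|, r has the same parity as a, and gcd(r, b) = 1. -/
/-!
Take for `r` the balanced residue of `a` modulo `2b`: then `a = m b + r` with `m` even and
`-|b| ≤ r < |b|`, and since `m b` is even and a multiple of `b`, `r` has the parity of `a` and
`gcd(r, b) = gcd(a, b) = 1`. The endpoint `r = -|b|` would give `|b| = gcd(r, b) = 1`, so `b` odd,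
`a` even and hence `r = -1` even, which is absurd.
-/

theorem Int.exists_even_mul_add_of_neg_abs_le_lt (a b : ℤ) (hb : b ≠ 0) :
    ∃ m r : ℤ, Even m ∧ a = m * b + r ∧ -|b| ≤ r ∧ r < |b| := by
  set r := Int.bmod a (2 * b).natAbs
  have hn : 0 < (2 * b).natAbs := by omega
  obtain ⟨k, hk⟩ : 2 * b ∣ r - a := Int.natAbs_dvd.mp Int.dvd_bmod_sub_self
  have hle : -((2 * b).natAbs / 2 : ℕ) ≤ r := Int.le_bmod hn
  have hlt : r < ((2 * b).natAbs + 1) / 2 := Int.bmod_lt hn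
  refine ⟨2 * -k, r, even_two_mul _, by linarith, ?_, ?_⟩ <;> rw [Int.abs_eq_natAbs] <;> omega

theorem Int.gcd_eq_of_eq_mul_add {a b m r : ℤ} (h : a = m * b + r) :
    Int.gcd r b = Int.gcd a b := by
  rw [eq_sub_of_add_eq' h.symm, Int.gcd_sub_mul_right_left]

theorem Int.even_iff_of_eq_mul_add {a b m r : ℤ} (hm : Even m) (h : a = m * b + r) :
    Even r ↔ Even a := by
  rw [h, Int.even_add]
  simp [hm.mul_right b]

theorem Int.gcd_neg_abs_self (b : ℤ) : Int.gcd (-|b|) b = b.natAbs := by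
  rw [Int.gcd_eq_natAbs_gcd_natAbs, Int.natAbs_neg, Int.natAbs_abs, Nat.gcd_self]

/-- General division with even quotient: for coprime `a`, `b` of opposite
parity with `b ≠ 0`, one has `a = m·b + r` with `m` even, `|r| < |b|`, `r` of
the same parity as `a`, and `gcd(r, b) = 1`. -/
theorem stmt_4 (a b : ℤ) (hb : b ≠ 0) (hco : Int.gcd a b = 1)
    (hpar : (Even a ∧ Odd b) ∨ (Odd a ∧ Even b)) :
    ∃ m r : ℤ, Even m ∧ a = m * b + r ∧ |r| < |b| ∧ (Even r ↔ Even a) ∧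
      Int.gcd r b = 1 := by
  obtain ⟨m, r, hm, hdiv, hle, hlt⟩ := Int.exists_even_mul_add_of_neg_abs_le_lt a b hb
  have hgcd : Int.gcd r b = 1 := (Int.gcd_eq_of_eq_mul_add hdiv).trans hco
  have hparity : Even r ↔ Even a := Int.even_iff_of_eq_mul_add hm hdiv
  refine ⟨m, r, hm, hdiv, abs_lt.mpr ⟨lt_of_le_of_ne hle fun hr => ?_, hlt⟩, hparity, hgcd⟩
  have hb1 : |b| = 1 := by
    rw [← hr, Int.gcd_neg_abs_self] at hgcd
    rw [Int.abs_eq_natAbs, hgcd, Nat.cast_one]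
  have ha : Even a := by
    have hbodd : Odd b := odd_abs.mp (hb1 ▸ odd_one)
    rcases hpar with ⟨ha, -⟩ | ⟨-, hbeven⟩
    · exact ha
    · exact absurd hbeven (Int.not_even_iff_odd.mpr hbodd)
  have hr1 : r = -1 := by rw [← hr, hb1]
  exact Int.not_even_iff_odd.mpr (hr1 ▸ odd_neg_one) (hparity.mpr ha)
end
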